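/- Let G be a group and N a normal subgroup of G. If the quotient G/N is capable, then the exterior center Z^∧(G) is contained in N. -/

import Mathlib

/-!
Nonabelian tensor square modulo `q` (Conduché–Ellis / Brown–Loday for `q = 0`),
presented by generators `g ⊗ h` and `{(g,g)}` with the defining relations.
-/

namespace QTensor

/-- Generators of the `q`-tensor square: `t g h` stands for `g ⊗ h`,
and `d g` stands for the symbol `{(g,g)}`. -/
inductive Gen (G : Type) : Type
  | t : G → G → Gen G
  | d : G → Gen G

variable (G : Type) [Group G]

/-- The word `g ⊗ h` in the free group on the generators. -/
def T (g h : G) : FreeGroup (Gen G) := FreeGroup.of (Gen.t g h)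

/-- The word `{(g,g)}` in the free group on the generators. -/
def D (g : G) : FreeGroup (Gen G) := FreeGroup.of (Gen.d g)

/-- The word `∏_{i=1}^{q-1} (g⁻¹ ⊗ (^(g^(1-q+i)) g₁)^i)` appearing in relation (4). -/
def relProd (q : ℕ) (g g₁ : G) : FreeGroup (Gen G) :=
  ((List.range (q - 1)).map (fun j =>
    T G g⁻¹ ((g ^ ((1 : ℤ) - (q : ℤ) + (j + 1 : ℕ)) * g₁ *
      (g ^ ((1 : ℤ) - (q : ℤ) + (j + 1 : ℕ)))⁻¹) ^ (j + 1)))).prod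

/-- The defining relations of the `q`-tensor square.  For `q = 0` the symbols
`{(g,g)}` are killed, so that the group is the Brown–Loday nonabelian tensor
square generated by the `g ⊗ h` subject to relations (1) and (2). -/
def rels (q : ℕ) : Set (FreeGroup (Gen G)) :=
  {r | ∃ g g₁ h : G,
      r = T G (g * g₁) h * (T G (g * g₁ * g⁻¹) (g * h * g⁻¹) * T G g h)⁻¹} ∪
  {r | ∃ g h h₁ : G,
      r = T G g (h * h₁) * (T G g h * T G (h * g * h⁻¹) (h * h₁ * h⁻¹))⁻¹} ∪
  {r | ∃ g g₁ h₁ : G,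
      r = D G g * T G g₁ h₁ * (D G g)⁻¹ *
        (T G (g ^ q * g₁ * (g ^ q)⁻¹) (g ^ q * h₁ * (g ^ q)⁻¹))⁻¹} ∪
  {r | ∃ g g₁ : G,
      r = D G (g * g₁) * (D G g * relProd G q g g₁ * D G g₁)⁻¹} ∪
  {r | ∃ g g₁ : G,
      r = D G g * D G g₁ * (D G g)⁻¹ * (D G g₁)⁻¹ * (T G (g ^ q) (g₁ ^ q))⁻¹} ∪
  {r | ∃ g h : G,
      r = D G (g * h * g⁻¹ * h⁻¹) * ((T G g h) ^ q)⁻¹} ∪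
  {r | q = 0 ∧ ∃ g : G, r = D G g}

/-- The nonabelian tensor square modulo `q`, `G ⊗^q G`. -/
def tensorSquare (q : ℕ) : Type := PresentedGroup (rels G q)

instance (q : ℕ) : Group (tensorSquare G q) := by unfold tensorSquare; infer_instance

/-- The element `g ⊗ h` of `G ⊗^q G`. -/
def tmk (q : ℕ) (g h : G) : tensorSquare G q := PresentedGroup.of (Gen.t g h)

/-- The element `{(g,g)}` of `G ⊗^q G`. -/
def dmk (q : ℕ) (g : G) : tensorSquare G q := PresentedGroup.of (Gen.d g)

/-- `∇^q(G)`, the normal closure of the elements `g ⊗ g` in `G ⊗^q G`. -/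
def nabla (q : ℕ) : Subgroup (tensorSquare G q) :=
  Subgroup.normalClosure {x | ∃ g : G, x = tmk G q g g}

instance (q : ℕ) : (nabla G q).Normal := Subgroup.normalClosure_normal

/-- The exterior square modulo `q`, `G ∧^q G = (G ⊗^q G)/∇^q(G)`. -/
def extSquare (q : ℕ) : Type := tensorSquare G q ⧸ nabla G q

instance (q : ℕ) : Group (extSquare G q) := by unfold extSquare; infer_instance

/-- The element `g ∧ h` of `G ∧^q G`. -/
def wmk (q : ℕ) (g h : G) : extSquare G q := QuotientGroup.mk (tmk G q g h)

/-- The image of the symbol `{(g,g)}` in `G ∧^q G`. -/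
def dwmk (q : ℕ) (g : G) : extSquare G q := QuotientGroup.mk (dmk G q g)

/-- The exterior centre variant `Z^∧_q(G) = {g : g ∧ h = 1 for all h}` (as a set). -/
def Zext (q : ℕ) : Set G := {g | ∀ h : G, wmk G q g h = 1}

/-- `E^∧_q(G) = {g ∈ Z^∧_q(G) : {(g,g)} = 1 in G ∧^q G}` (as a set); for `q = 0`
the second condition is automatic, so `E^∧_0(G) = Z^∧(G)`. -/
def Eext (q : ℕ) : Set G := {g | (∀ h : G, wmk G q g h = 1) ∧ dwmk G q g = 1}

/-- The subgroup `G^q[G,G]` generated by all `q`-th powers and all commutators. -/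
def qPowComm (q : ℕ) : Subgroup G :=
  Subgroup.closure ({x | ∃ g : G, x = g ^ q} ∪ {x | ∃ a b : G, x = a * b * a⁻¹ * b⁻¹})

theorem pow_mem_qPowComm (q : ℕ) (g : G) : g ^ q ∈ qPowComm G q :=
  Subgroup.subset_closure (Or.inl ⟨g, rfl⟩)

theorem commutator_mem_qPowComm (q : ℕ) (a b : G) :
    a * b * a⁻¹ * b⁻¹ ∈ qPowComm G q :=
  Subgroup.subset_closure (Or.inr ⟨a, b, rfl⟩)

open scoped commutatorElement in
theorem mem_commutator (a b : G) : ⁅a, b⁆ ∈ commutator G :=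
  Subgroup.commutator_mem_commutator (Subgroup.mem_top a) (Subgroup.mem_top b)

/-- `M₀^q(G)`: the subgroup of `G ∧^q G` generated by the `x ∧ y` with `[x,y] = 1`.
(It is contained in the `q`-Schur multiplier `M^q(G)`.) -/
def M0 (q : ℕ) : Subgroup (extSquare G q) :=
  Subgroup.closure {x | ∃ a b : G, a * b = b * a ∧ x = wmk G q a b}

/-- `M̂₀^q(G)`: the subgroup of `G ∧^q G` generated by the `x ∧ y` with `[x,y] = 1`
together with the `{(g,g)}` with `g^q = 1`. -/
def M0hat (q : ℕ) : Subgroup (extSquare G q) :=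
  Subgroup.closure
    ({x | ∃ a b : G, a * b = b * a ∧ x = wmk G q a b} ∪
     {x | ∃ g : G, g ^ q = 1 ∧ x = dwmk G q g})

/-- A group `Q` is capable if `Q ≅ E/Z(E)` for some group `E`. -/
def Capable (Q : Type) [Group Q] : Prop :=
  ∃ (E : Type) (_ : Group E), Nonempty (Q ≃* E ⧸ Subgroup.center E)

end QTensor


/-!
If `φ : G/N ≃ E/Z(E)`, then `(a, b) ↦ [ã, b̃]`, where `ã, b̃ ∈ E` lift `φ(aN), φ(bN)`, is well defined
(commutators only see elements modulo the centre) and satisfies the defining relations of `G ∧ G`,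
so it factors through `a ∧ b`. For `g ∈ Z^∧(G)` the lift `g̃` therefore commutes with every
element of `E`, i.e. `φ(gN) = 1`, i.e. `g ∈ N`.
-/

namespace QTensor

open scoped commutatorElement

variable {G H E : Type} [Group G] [Group H] [Group E]

/-- The relations of `G ∧ G` (Brown–Loday, `q = 0`) for a candidate image `w g h` of `g ∧ h`. -/
structure IsExteriorPairing (w : G → G → E) : Prop where
  mul_left : ∀ g g₁ h, w (g * g₁) h = w (g * g₁ * g⁻¹) (g * h * g⁻¹) * w g h
  mul_right : ∀ g h h₁, w g (h * h₁) = w g h * w (h * g * h⁻¹) (h * h₁ * h⁻¹)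
  self : ∀ g, w g g = 1

theorem isExteriorPairing_commutatorElement : IsExteriorPairing (fun x y : E => ⁅x, y⁆) where
  mul_left _ _ _ := by simp only [commutatorElement_def]; group
  mul_right _ _ _ := by simp only [commutatorElement_def]; group
  self := commutatorElement_self

theorem IsExteriorPairing.comp {w : H → H → E} (hw : IsExteriorPairing w) (p : G →* H) :
    IsExteriorPairing (fun a b => w (p a) (p b)) where
  mul_left g g₁ h := by simpa only [map_mul, map_inv] using hw.mul_left (p g) (p g₁) (p h)
  mul_right g h h₁ := by simpa only [map_mul, map_inv] using hw.mul_right (p g) (p h) (p h₁)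
  self g := hw.self (p g)

section Lift

variable {w : G → G → E}

/-- The generator `{(g,g)}` is killed in `G ⊗ G`, so it is sent to `1`. -/
def genEval (w : G → G → E) : Gen G → E
  | .t a b => w a b
  | .d _ => 1

theorem IsExteriorPairing.lift_rels (hw : IsExteriorPairing w) :
    ∀ r ∈ rels G 0, FreeGroup.lift (genEval w) r = 1 := by
  have hT : ∀ a b : G, FreeGroup.lift (genEval w) (T G a b) = w a b :=
    fun _ _ => FreeGroup.lift_apply_of
  have hD : ∀ a : G, FreeGroup.lift (genEval w) (D G a) = 1 :=
    fun _ => FreeGroup.lift_apply_of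
  rintro r ((((((⟨g, g₁, h, rfl⟩ | ⟨g, h, h₁, rfl⟩) | ⟨g, g₁, h₁, rfl⟩) | ⟨g, g₁, rfl⟩) |
    ⟨g, g₁, rfl⟩) | ⟨g, h, rfl⟩) | ⟨-, g, rfl⟩)
  · rw [map_mul, map_inv, map_mul, hT, hT, hT, mul_inv_eq_one, hw.mul_left]
  · rw [map_mul, map_inv, map_mul, hT, hT, hT, mul_inv_eq_one, hw.mul_right]
  · simp only [map_mul, map_inv, hT, hD, pow_zero, one_mul, inv_one, mul_one, mul_inv_cancel]
  · simp only [relProd, Nat.zero_sub, List.range_zero, List.map_nil, List.prod_nil,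
      map_mul, map_inv, hD, mul_one, inv_one]
  · simp only [map_mul, map_inv, hT, hD, pow_zero, hw.self, mul_one, inv_one]
  · simp only [pow_zero, hD, inv_one, mul_one]
  · exact hD g

def tensorSquareLift (hw : IsExteriorPairing w) : tensorSquare G 0 →* E :=
  PresentedGroup.toGroup hw.lift_rels

theorem tensorSquareLift_tmk (hw : IsExteriorPairing w) (a b : G) :
    tensorSquareLift hw (tmk G 0 a b) = w a b :=
  PresentedGroup.toGroup.of hw.lift_rels

def extSquareLift (hw : IsExteriorPairing w) : extSquare G 0 →* E :=
  QuotientGroup.lift (nabla G 0) (tensorSquareLift hw) <| by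
    refine Subgroup.normalClosure_le_normal ?_
    rintro _ ⟨g, rfl⟩
    exact (tensorSquareLift_tmk hw g g).trans (hw.self g)

theorem extSquareLift_wmk (hw : IsExteriorPairing w) (a b : G) :
    extSquareLift hw (wmk G 0 a b) = w a b :=
  tensorSquareLift_tmk hw a b

theorem IsExteriorPairing.eq_one_of_mem_Zext (hw : IsExteriorPairing w) {g : G}
    (hg : g ∈ Zext G 0) (h : G) : w g h = 1 := by
  rw [← extSquareLift_wmk hw, hg h, map_one]

end Lift

section CenterCommutator

theorem commutatorElement_mul_center_left {x y z : E} (hz : z ∈ Subgroup.center E) :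
    ⁅x * z, y⁆ = ⁅x, y⁆ := by
  have hzy : z * y * z⁻¹ = y := by rw [← Subgroup.mem_center_iff.mp hz y, mul_inv_cancel_right]
  calc ⁅x * z, y⁆ = x * (z * y * z⁻¹) * x⁻¹ * y⁻¹ := by rw [commutatorElement_def]; group
    _ = ⁅x, y⁆ := by rw [hzy, commutatorElement_def]

theorem commutatorElement_mul_center_right {x y z : E} (hz : z ∈ Subgroup.center E) :
    ⁅x, y * z⁆ = ⁅x, y⁆ := by
  rw [← inv_inj, commutatorElement_inv, commutatorElement_inv,
    commutatorElement_mul_center_left hz]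

def centerCommutator : E ⧸ Subgroup.center E → E ⧸ Subgroup.center E → E :=
  Quotient.lift₂ (fun x y : E => ⁅x, y⁆) fun x y x' y' hx hy => by
    replace hx := QuotientGroup.leftRel_apply.mp hx
    replace hy := QuotientGroup.leftRel_apply.mp hy
    calc ⁅x, y⁆ = ⁅x * (x⁻¹ * x'), y * (y⁻¹ * y')⁆ := by
          rw [commutatorElement_mul_center_left hx, commutatorElement_mul_center_right hy]
      _ = ⁅x', y'⁆ := by rw [mul_inv_cancel_left, mul_inv_cancel_left]

theorem isExteriorPairing_centerCommutator :
    IsExteriorPairing (centerCommutator (E := E)) where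
  mul_left u v t := by
    induction u using QuotientGroup.induction_on
    induction v using QuotientGroup.induction_on
    induction t using QuotientGroup.induction_on
    exact isExteriorPairing_commutatorElement.mul_left _ _ _
  mul_right u v t := by
    induction u using QuotientGroup.induction_on
    induction v using QuotientGroup.induction_on
    induction t using QuotientGroup.induction_on
    exact isExteriorPairing_commutatorElement.mul_right _ _ _
  self u := by
    induction u using QuotientGroup.induction_on
    exact commutatorElement_self _

theorem eq_one_of_centerCommutator_eq_one {u : E ⧸ Subgroup.center E}
    (hu : ∀ v, centerCommutator u v = 1) : u = 1 := by
  induction u using QuotientGroup.induction_on with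
  | H x =>
    refine (QuotientGroup.eq_one_iff x).mpr (Subgroup.mem_center_iff.mpr fun y => ?_)
    exact (commutatorElement_eq_one_iff_mul_comm.mp (hu y)).symm

end CenterCommutator

end QTensor

open QTensor in
/-- If `N ⊴ G` and `G/N` is capable, then `Z^∧(G) ≤ N`. -/
theorem zext_le_of_capable_quotient (G : Type) [Group G] (N : Subgroup G) [N.Normal]
    (hcap : Capable (G ⧸ N)) :
    Zext G 0 ⊆ (N : Set G) := by
  obtain ⟨E, _, ⟨φ⟩⟩ := hcap
  let p : G →* E ⧸ Subgroup.center E := φ.toMonoidHom.comp (QuotientGroup.mk' N)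
  have hp : Function.Surjective p := φ.surjective.comp (QuotientGroup.mk'_surjective N)
  have hw := isExteriorPairing_centerCommutator.comp p
  intro g hg
  have hpg : p g = 1 := eq_one_of_centerCommutator_eq_one fun v => by
    obtain ⟨h, rfl⟩ := hp v
    exact hw.eq_one_of_mem_Zext hg h
  have hmk : (g : G ⧸ N) = 1 := φ.map_eq_one_iff.mp hpg
  exact (QuotientGroup.eq_one_iff g).mp hmk
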